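/- Let F ⊆ G be prime lattice filters of an MV-algebra L. Then F ⊸ G = J_u(F, K(G)) ⊸ G. -/

import Mathlib

/-- An MV-algebra: a commutative monoid `(L, ⊕, 0)` with a unary `¬` satisfying
`¬¬x = x`, `x ⊕ ¬0 = ¬0` and `¬(¬x ⊕ y) ⊕ y = ¬(¬y ⊕ x) ⊕ x`. -/
class MV (L : Type*) where
  add : L → L → L
  zero : L
  neg : L → L
  add_assoc : ∀ x y z : L, add (add x y) z = add x (add y z)
  add_comm : ∀ x y : L, add x y = add y x
  add_zero : ∀ x : L, add x zero = x
  neg_neg : ∀ x : L, neg (neg x) = x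
  add_neg_zero : ∀ x : L, add x (neg zero) = neg zero
  luk : ∀ x y : L, add (neg (add (neg x) y)) y = add (neg (add (neg y) x)) x

namespace MV

variable {L : Type*} [MV L]

/-- `1 = ¬0`. -/
def one : L := neg zero

/-- `x → y = ¬x ⊕ y`. -/
def imp (x y : L) : L := add (neg x) y

/-- `x ⊗ y = ¬(¬x ⊕ ¬y)`. -/
def otimes (x y : L) : L := neg (add (neg x) (neg y))

/-- `x ∨ y = (x → y) → y`. -/
def join (x y : L) : L := imp (imp x y) y

/-- `x ∧ y = ¬(¬x ∨ ¬y)`. -/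
def meet (x y : L) : L := neg (join (neg x) (neg y))

/-- `x ≤ y` iff `x → y = 1`. -/
def le (x y : L) : Prop := imp x y = one

/-- `x < y` iff `x ≤ y` and `x ≠ y`. -/
def lt (x y : L) : Prop := le x y ∧ x ≠ y

/-- A lattice filter: nonempty, upward closed, closed under `∧`. -/
def IsLatticeFilter (F : Set L) : Prop :=
  F.Nonempty ∧ (∀ x y : L, x ∈ F → le x y → y ∈ F) ∧
    (∀ x y : L, x ∈ F → y ∈ F → meet x y ∈ F)

/-- A prime lattice filter: a proper lattice filter such that
`x ∨ y ∈ F` implies `x ∈ F` or `y ∈ F`. -/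
def IsPrimeFilter (F : Set L) : Prop :=
  IsLatticeFilter F ∧ F ≠ Set.univ ∧ ∀ x y : L, join x y ∈ F → x ∈ F ∨ y ∈ F

/-- `F ⊸ G = {z | ∀ a ∉ G, z → a ∉ F}` (intended for `F ⊆ G`). -/
def lolli (F G : Set L) : Set L := {z | ∀ a ∉ G, imp z a ∉ F}

/-- The general `F ⊸ G = (F ∩ G) ⊸ G`. -/
def lolli' (F G : Set L) : Set L := lolli (F ∩ G) G

/-- The kernel `K(F) = {z | ∀ a ∉ F, z → a ∉ F}`. -/
def ker (F : Set L) : Set L := {z | ∀ a ∉ F, imp z a ∉ F}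

/-- `F⁺ = {z | ¬z ∉ F}`. -/
def plus (F : Set L) : Set L := {z | neg z ∉ F}

/-- An implication filter: contains `1` and is closed under modus ponens. -/
def IsImplicationFilter (P : Set L) : Prop :=
  (one : L) ∈ P ∧ ∀ x y : L, x ∈ P → imp x y ∈ P → y ∈ P

/-- `x ~_P y` iff `x → y ∈ P` and `y → x ∈ P`. -/
def simP (P : Set L) (x y : L) : Prop := imp x y ∈ P ∧ imp y x ∈ P

/-- `J_u(F, P) = {z | ∃ f ∈ F, z ~_P f}`. -/
def Ju (F P : Set L) : Set L := {z | ∃ f ∈ F, simP P z f}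

/-- `J_d(F, P) = (J_u(F⁺, P))⁺`. -/
def Jd (F P : Set L) : Set L := plus (Ju (plus F) P)

end MV

open MV

/-! The inclusion `J_u(F, K(G)) ⊸ G ⊆ F ⊸ G` is antitonicity of `⊸` in its first argument,
since `F ⊆ J_u(F, K(G)) ∩ G`. Conversely, if `z → a ∈ J_u(F, K(G))` for some `a ∉ G`, witnessed
by `f ∈ F` with `f → (z → a) ∈ K(G)`, then `a' = (f → (z → a)) → a ∉ G`, while
`f ≤ z → a'` puts `z → a'` in `F`; so `z ∉ F ⊸ G`. -/

namespace MV

variable {L : Type*} [MV L]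

instance : Std.Associative (MV.add : L → L → L) := ⟨MV.add_assoc⟩
instance : Std.Commutative (MV.add : L → L → L) := ⟨MV.add_comm⟩

lemma zero_add (x : L) : add zero x = x := by
  rw [MV.add_comm, MV.add_zero]

lemma neg_add_self (x : L) : add (neg x) x = one := by
  have h := luk x (one : L)
  rw [show add (neg x) (one : L) = one from add_neg_zero (neg x),
    show neg (one : L) = zero from neg_neg zero, zero_add, zero_add] at h
  exact h.symm

lemma imp_self (x : L) : imp x x = one := neg_add_self x

lemma one_imp (a : L) : imp (one : L) a = a := by
  rw [one, imp, MV.neg_neg, zero_add]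

lemma le_imp_imp_imp_imp (f z a : L) : le f (imp z (imp (imp f (imp z a)) a)) := by
  show add (neg f) (add (neg z) (add (neg (add (neg f) (add (neg z) a))) a)) = one
  rw [show add (neg f) (add (neg z) (add (neg (add (neg f) (add (neg z) a))) a))
      = add (neg (add (neg f) (add (neg z) a))) (add (neg f) (add (neg z) a)) by ac_rfl,
    neg_add_self]

lemma one_mem_ker (G : Set L) : (one : L) ∈ ker G := by
  intro a ha
  rwa [one_imp]

lemma subset_Ju {P : Set L} (hP : (one : L) ∈ P) (F : Set L) : F ⊆ Ju F P :=
  fun f hf => ⟨f, hf, by rw [imp_self]; exact hP, by rw [imp_self]; exact hP⟩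

lemma lolli_anti {F₁ F₂ : Set L} (h : F₁ ⊆ F₂) (G : Set L) : lolli F₂ G ⊆ lolli F₁ G :=
  fun _ hz a ha hmem => hz a ha (h hmem)

lemma lolli_subset_lolli_Ju_ker {F : Set L} (hF : ∀ x y : L, x ∈ F → le x y → y ∈ F)
    (G : Set L) : lolli F G ⊆ lolli (Ju F (ker G)) G := by
  rintro z hz a ha ⟨f, hf, -, hfza⟩
  exact hz _ (hfza a ha) (hF f _ hf (le_imp_imp_imp_imp f z a))

end MV

theorem stmt_12_general {L : Type*} [MV L] (F G : Set L)
    (hF : IsPrimeFilter F) (hFG : F ⊆ G) :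
    lolli F G = lolli' (Ju F (ker G)) G :=
  (lolli_subset_lolli_Ju_ker hF.1.2.1 G |>.trans (lolli_anti Set.inter_subset_left G)).antisymm
    (lolli_anti (Set.subset_inter (subset_Ju (one_mem_ker G) F) hFG) G)

/-- For prime lattice filters `F ⊆ G`,
`F ⊸ G = J_u(F, K(G)) ⊸ G`. -/
theorem stmt_12 {L : Type*} [MV L] (F G : Set L)
    (hF : IsPrimeFilter F) (hG : IsPrimeFilter G) (hFG : F ⊆ G) :
    lolli F G = lolli' (Ju F (ker G)) G :=
  stmt_12_general F G hF hFG
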